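/- arXiv:2001.00418 — 5 statements merged into one kernel-verified Lean document; each statement's English description precedes it below -/
import Mathlib

section
/- Let m, k be odd positive integers with gcd(m,k) = 1, n = 2m, and write x̄ = x^{2^m} for x ∈ F_{2^n}. If τ, ν ∈ F_{2^n}, then the number of solutions in F_{2^n} of the equation x^{2^k} + τ·x̄ + (τ+1)·x + ν = 0 is 0, 2, or 4. -/
private lemma pow_two_pow_mul {M : Type*} [Monoid M] (d : M) (a : ℕ) (ha : d ^ 2 ^ a = d) :
    ∀ q : ℕ, d ^ 2 ^ (a * q) = d := by
  intro q
  induction q with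
  | zero => simpa using pow_one d
  | succ q ih =>
    have : a * (q + 1) = a * q + a := by ring
    rw [this, pow_add, pow_mul, ih, ha]

private lemma pow_two_pow_gcd {M : Type*} [Monoid M] (d : M) :
    ∀ a b : ℕ, d ^ 2 ^ a = d → d ^ 2 ^ b = d → d ^ 2 ^ (Nat.gcd a b) = d := by
  intro a b
  induction a, b using Nat.gcd.induction with
  | H0 n => intro _ hb; rwa [Nat.gcd_zero_left]
  | H1 a b ha ih =>
    intro h1 h2
    rw [Nat.gcd_rec]
    refine ih ?_ h1
    have hb : b = a * (b / a) + b % a := (Nat.div_add_mod b a).symm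
    calc d ^ 2 ^ (b % a) = (d ^ 2 ^ (a * (b / a))) ^ 2 ^ (b % a) := by
          rw [pow_two_pow_mul d a h1]
      _ = d ^ 2 ^ b := by rw [← pow_mul, ← pow_add, ← hb]
      _ = d := h2

/-- Lemma 3 (first part): for odd `m, k` with `gcd(m,k) = 1` and `n = 2m`, the number of
solutions in `F_{2^n}` of `x^{2^k} + τ·x̄ + (τ+1)·x + ν = 0` (with `x̄ = x^{2^m}`)
is 0, 2 or 4. -/
theorem stmt_2 (m k : ℕ) (hm : Odd m) (hk : Odd k) (hm0 : 0 < m) (hk0 : 0 < k)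
    (hgcd : Nat.gcd m k = 1) (τ ν : GaloisField 2 (2 * m)) :
    {x : GaloisField 2 (2 * m) |
        x ^ 2 ^ k + τ * x ^ 2 ^ m + (τ + 1) * x + ν = 0}.ncard = 0 ∨
    {x : GaloisField 2 (2 * m) |
        x ^ 2 ^ k + τ * x ^ 2 ^ m + (τ + 1) * x + ν = 0}.ncard = 2 ∨
    {x : GaloisField 2 (2 * m) |
        x ^ 2 ^ k + τ * x ^ 2 ^ m + (τ + 1) * x + ν = 0}.ncard = 4 := by
  classical
  haveI : Fintype (GaloisField 2 (2 * m)) := Fintype.ofFinite _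
  have h2 : (2 : GaloisField 2 (2 * m)) = 0 := by
    have := CharP.cast_eq_zero (GaloisField 2 (2 * m)) 2
    exact_mod_cast this
  have hcard : Fintype.card (GaloisField 2 (2 * m)) = 2 ^ (2 * m) := by
    rw [← Nat.card_eq_fintype_card]
    exact GaloisField.card 2 (2 * m) (by omega)
  -- Frobenius of order two
  have hQQ : ∀ x : GaloisField 2 (2 * m), (x ^ 2 ^ m) ^ 2 ^ m = x := by
    intro x
    rw [← pow_mul, ← pow_add]
    have : m + m = 2 * m := by ring
    rw [this, ← hcard]
    exact FiniteField.pow_card x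
  set L : GaloisField 2 (2 * m) → GaloisField 2 (2 * m) := fun x => x ^ 2 ^ k + τ * x ^ 2 ^ m + (τ + 1) * x with hL
  have hLadd : ∀ x y : GaloisField 2 (2 * m), L (x + y) = L x + L y := by
    intro x y
    simp only [hL]
    rw [add_pow_char_pow (p := 2), add_pow_char_pow (p := 2)]
    ring
  set K : Set (GaloisField 2 (2 * m)) := {x : GaloisField 2 (2 * m) | L x = 0} with hK
  -- core dichotomy
  have core : ∀ d : GaloisField 2 (2 * m), d ^ 2 ^ k = d → d ^ 2 ^ m = d → d = 0 ∨ d = 1 := by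
    intro d hdk hdm
    have h1 : d ^ 2 ^ (Nat.gcd k m) = d := pow_two_pow_gcd d k m hdk hdm
    rw [Nat.gcd_comm, hgcd, pow_one] at h1
    have : d * (d - 1) = 0 := by linear_combination h1
    rcases mul_eq_zero.mp this with h | h
    · exact Or.inl h
    · exact Or.inr (by linear_combination h)
  have h0K : (0 : GaloisField 2 (2 * m)) ∈ K := by
    simp only [hK, hL, Set.mem_setOf_eq]
    rw [zero_pow (by positivity), zero_pow (by positivity)]
    ring
  have h1K : (1 : GaloisField 2 (2 * m)) ∈ K := by
    simp only [hK, hL, Set.mem_setOf_eq, one_pow]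
    linear_combination (τ + 1) * h2
  have hclosed : ∀ x ∈ K, x + 1 ∈ K := by
    intro x hx
    simp only [hK, Set.mem_setOf_eq] at *
    rw [hLadd, hx, h1K, add_zero]
  -- claim A
  have claimA : ∀ x ∈ K, x ^ 2 ^ m = x → x = 0 ∨ x = 1 := by
    intro x hx hq
    simp only [hK, hL, Set.mem_setOf_eq] at hx
    rw [hq] at hx
    refine core x ?_ hq
    linear_combination hx - (x + τ * x) * h2
  -- conjugated equation
  have conj : ∀ x ∈ K, (x ^ 2 ^ m) ^ 2 ^ k + τ ^ 2 ^ m * x + (τ ^ 2 ^ m + 1) * x ^ 2 ^ m = 0 := by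
    intro x hx
    simp only [hK, hL, Set.mem_setOf_eq] at hx
    have h := congrArg (fun z : GaloisField 2 (2 * m) => z ^ 2 ^ m) hx
    rw [zero_pow (by positivity), add_pow_char_pow (p := 2), add_pow_char_pow (p := 2),
      mul_pow, mul_pow, hQQ, add_pow_char_pow (p := 2), one_pow, pow_right_comm] at h
    linear_combination h
  have claimT : ∀ x ∈ K, (x + x ^ 2 ^ m) ^ 2 ^ k + (τ + τ ^ 2 ^ m + 1) * (x + x ^ 2 ^ m) = 0 := by
    intro x hx
    have h1 := hx
    simp only [hK, hL, Set.mem_setOf_eq] at h1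
    have h2' := conj x hx
    rw [add_pow_char_pow (p := 2)]
    linear_combination h1 + h2'
  have claimTq : ∀ x : GaloisField 2 (2 * m), (x + x ^ 2 ^ m) ^ 2 ^ m = x + x ^ 2 ^ m := by
    intro x
    rw [add_pow_char_pow (p := 2), hQQ]
    ring
  -- claim C : fibers of x ↦ x + x̄ on K have at most two elements
  have claimC : ∀ x ∈ K, ∀ y ∈ K, x + x ^ 2 ^ m = y + y ^ 2 ^ m → y = x ∨ y = x + 1 := by
    intro x hx y hy hphi
    have hxe := hx; have hye := hy
    simp only [hK, hL, Set.mem_setOf_eq] at hxe hye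
    set d : GaloisField 2 (2 * m) := x + y with hd
    have hdq : d ^ 2 ^ m = d := by
      rw [hd, add_pow_char_pow (p := 2)]
      linear_combination hphi + (y ^ 2 ^ m - x) * h2
    have hdk : d ^ 2 ^ k = d := by
      have hsum : d ^ 2 ^ k + τ * d ^ 2 ^ m + (τ + 1) * d = 0 := by
        rw [hd, add_pow_char_pow (p := 2), add_pow_char_pow (p := 2)]
        linear_combination hxe + hye
      rw [hdq] at hsum
      linear_combination hsum - (d + τ * d) * h2
    rcases core d hdk hdq with h | h
    · left; rw [hd] at h; linear_combination h - x * h2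
    · right; rw [hd] at h; linear_combination h - x * h2
  -- claim B : nonzero values of x ↦ x + x̄ on K coincide
  have claimB : ∀ x ∈ K, ∀ y ∈ K, x + x ^ 2 ^ m ≠ 0 → y + y ^ 2 ^ m ≠ 0 →
      x + x ^ 2 ^ m = y + y ^ 2 ^ m := by
    intro x hx y hy hxne hyne
    set c : GaloisField 2 (2 * m) := τ + τ ^ 2 ^ m + 1 with hc
    set t1 : GaloisField 2 (2 * m) := x + x ^ 2 ^ m with ht1d
    set t2 : GaloisField 2 (2 * m) := y + y ^ 2 ^ m with ht2d
    have ht1 : t1 ^ 2 ^ k = c * t1 := by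
      have := claimT x hx
      linear_combination this - c * t1 * h2
    have ht2 : t2 ^ 2 ^ k = c * t2 := by
      have := claimT y hy
      linear_combination this - c * t2 * h2
    have hcne : c ≠ 0 := by
      intro h
      apply hxne
      have h0 : t1 ^ 2 ^ k = 0 := by rw [ht1, h, zero_mul]
      exact pow_eq_zero_iff (by positivity) |>.mp h0
    set u : GaloisField 2 (2 * m) := t1 / t2 with hu
    have hu0 : u ≠ 0 := div_ne_zero hxne hyne
    have huk : u ^ 2 ^ k = u := by
      rw [hu, div_pow, ht1, ht2, mul_div_mul_left _ _ hcne]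
    have huq : u ^ 2 ^ m = u := by
      rw [hu, div_pow, ht1d, ht2d, claimTq x, claimTq y]
    rcases core u huk huq with h | h
    · exact absurd h hu0
    · have := (div_eq_one_iff_eq hyne).mp h
      exact this
  -- K has cardinality 2 or 4
  have hKcard : K.ncard = 2 ∨ K.ncard = 4 := by
    by_cases hw : ∃ w, w ∈ K ∧ w ≠ 0 ∧ w ≠ 1
    · obtain ⟨w, hwK, hw0, hw1⟩ := hw
      have hwphi : w + w ^ 2 ^ m ≠ 0 := by
        intro h
        have hq : w ^ 2 ^ m = w := by linear_combination h - w * h2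
        rcases claimA w hwK hq with h' | h' <;> [exact hw0 h'; exact hw1 h']
      have hw1' : w + 1 ≠ 0 := fun h => hw1 (by linear_combination h - h2)
      have hKeq : K = {0, 1, w, w + 1} := by
        apply Set.Subset.antisymm
        · intro x hx
          by_cases hxphi : x + x ^ 2 ^ m = 0
          · have hq : x ^ 2 ^ m = x := by linear_combination hxphi - x * h2
            rcases claimA x hx hq with h | h
            · exact Or.inl h
            · exact Or.inr (Or.inl h)
          · have hph := claimB w hwK x hx hwphi hxphi
            rcases claimC w hwK x hx hph with h | h
            · exact Or.inr (Or.inr (Or.inl h))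
            · exact Or.inr (Or.inr (Or.inr h))
        · intro x hx
          rcases hx with h | h | h | h
          · rw [h]; exact h0K
          · rw [h]; exact h1K
          · rw [h]; exact hwK
          · rw [h]; exact hclosed w hwK
      right
      rw [hKeq]
      have d1 : (0 : GaloisField 2 (2 * m)) ∉ ({1, w, w + 1} : Set (GaloisField 2 (2 * m))) := by
        simp only [Set.mem_insert_iff, Set.mem_singleton_iff]
        push_neg
        exact ⟨fun h => one_ne_zero h.symm, fun h => hw0 h.symm, fun h => hw1' h.symm⟩
      have d2 : (1 : GaloisField 2 (2 * m)) ∉ ({w, w + 1} : Set (GaloisField 2 (2 * m))) := by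
        simp only [Set.mem_insert_iff, Set.mem_singleton_iff]
        push_neg
        refine ⟨fun h => hw1 h.symm, fun h => hw0 ?_⟩
        linear_combination h.symm
      have d3 : w ∉ ({w + 1} : Set (GaloisField 2 (2 * m))) := by
        simp only [Set.mem_singleton_iff]
        intro h
        have : (1 : GaloisField 2 (2 * m)) = 0 := by linear_combination -h
        exact one_ne_zero this
      rw [Set.ncard_insert_of_notMem d1, Set.ncard_insert_of_notMem d2,
        Set.ncard_insert_of_notMem d3, Set.ncard_singleton]
    · left
      push_neg at hw
      have hKeq : K = {0, 1} := by
        apply Set.Subset.antisymm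
        · intro x hx
          by_cases h : x = 0
          · exact Or.inl h
          · exact Or.inr (hw x hx h)
        · intro x hx
          rcases hx with h | h
          · rw [h]; exact h0K
          · rw [h]; exact h1K
      rw [hKeq]
      exact Set.ncard_pair zero_ne_one
  -- relate the solution set to K
  set S : Set (GaloisField 2 (2 * m)) := {x : GaloisField 2 (2 * m) | x ^ 2 ^ k + τ * x ^ 2 ^ m + (τ + 1) * x + ν = 0} with hS
  rcases Set.eq_empty_or_nonempty S with hemp | ⟨x0, hx0⟩
  · left; rw [hemp, Set.ncard_empty]
  · have hx0' : L x0 + ν = 0 := hx0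
    have hSK : S = (fun y => y + x0) '' K := by
      ext x
      simp only [hS, Set.mem_setOf_eq, Set.mem_image]
      constructor
      · intro hx
        refine ⟨x + x0, ?_, by linear_combination x0 * h2⟩
        show L (x + x0) = 0
        rw [hLadd]
        have hxL : L x + ν = 0 := hx
        linear_combination hxL + hx0' - ν * h2
      · rintro ⟨y, hy, rfl⟩
        have hyL : L y = 0 := hy
        show L (y + x0) + ν = 0
        rw [hLadd]
        linear_combination hyL + hx0'
    have : S.ncard = K.ncard := by
      rw [hSK]
      exact Set.ncard_image_of_injective K (add_left_injective x0)
    rcases hKcard with h | h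
    · right; left; rw [this, h]
    · right; right; rw [this, h]
end

section
/- Let m, k be odd positive integers with gcd(m,k) = 1, n = 2m, and suppose τ, λ, μ ∈ F_{2^n} satisfy λ ∈ F_{2^m}, 1 + τ + τ̄ ≠ 0, λ^{2^k - 1} = 1 + τ + τ̄, μ^{2^k} + μ = τλ, and μ + μ̄ = λ (where x̄ = x^{2^m}). Then the set of solutions in F_{2^n} of x^{2^k} + τ·x̄ + (τ+1)·x = 0 is exactly {0, 1, μ, μ+1}. -/
/-!
`L x = x ^ 2 ^ k + τ x̄ + (τ + 1) x` (`frobTrinomial`) is additive in characteristic 2.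
Since `F_{2^m} ∩ F_{2^k} = F_2` when `gcd(m, k) = 1`, every `w` with `w̄ = w` and `L w = 0`
(that is, `w ^ 2 ^ k = w`) lies in `{0, 1}`. For a root `x` of `L`, adding the conjugate
equation shows that `y = x + x̄ ∈ F_{2^m}` satisfies `y ^ 2 ^ k = λ ^ (2 ^ k - 1) y`, so
`y / λ ∈ {0, 1}`, i.e. `y = 0 + 0̄` or `y = μ + μ̄`. Then `x + 0` resp. `x + μ` is a
self-conjugate root of `L`, hence lies in `{0, 1}`.
-/

theorem pow_pow_gcd_eq_self {M : Type*} [Monoid M] (p : ℕ) {a b : ℕ} {x : M}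
    (ha : x ^ p ^ a = x) (hb : x ^ p ^ b = x) : x ^ p ^ a.gcd b = x := by
  have hperiodic : ∀ n, x ^ p ^ n = x → Function.IsPeriodicPt (· ^ p) n x := fun n hn => by
    rwa [Function.IsPeriodicPt, Function.IsFixedPt, pow_iterate]
  simpa only [Function.IsPeriodicPt, Function.IsFixedPt, pow_iterate] using
    (hperiodic a ha).gcd (hperiodic b hb)

theorem eq_zero_or_one_of_pow_two_pow_eq_self {M₀ : Type*} [MonoidWithZero M₀]
    [IsLeftCancelMulZero M₀] {a b : ℕ} (hab : a.gcd b = 1) {x : M₀}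
    (ha : x ^ 2 ^ a = x) (hb : x ^ 2 ^ b = x) : x = 0 ∨ x = 1 := by
  have hsq := pow_pow_gcd_eq_self 2 ha hb
  rw [hab, pow_one, sq] at hsq
  exact IsIdempotentElem.iff_eq_zero_or_one.mp hsq

theorem GaloisField.pow_card_eq_self (p n : ℕ) [Fact p.Prime] (a : GaloisField p n) :
    a ^ p ^ n = a := by
  rcases eq_or_ne n 0 with rfl | hn
  · rw [pow_zero, pow_one]
  · have := Fintype.ofFinite (GaloisField p n)
    rw [← GaloisField.card p n hn, Nat.card_eq_fintype_card, FiniteField.pow_card]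

theorem eq_zero_or_eq_of_pow_two_pow_eq_pow_mul {F : Type*} [Field F] {m k : ℕ}
    (hgcd : m.gcd k = 1) {lam y : F} (hlam0 : lam ≠ 0)
    (hlam : lam ^ 2 ^ m = lam) (hy : y ^ 2 ^ m = y) (hyk : y ^ 2 ^ k = lam ^ (2 ^ k - 1) * y) :
    y = 0 ∨ y = lam := by
  have hlamk : lam ^ 2 ^ k = lam ^ (2 ^ k - 1) * lam := by
    rw [← pow_succ, Nat.sub_add_cancel Nat.one_le_two_pow]
  have hz : (y / lam) ^ 2 ^ k = y / lam := by
    rw [div_pow, hyk, hlamk, mul_div_mul_left _ _ (pow_ne_zero _ hlam0)]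
  have hzbar : (y / lam) ^ 2 ^ m = y / lam := by rw [div_pow, hy, hlam]
  rcases eq_zero_or_one_of_pow_two_pow_eq_self hgcd hzbar hz with h | h
  · exact Or.inl ((div_eq_zero_iff.mp h).resolve_right hlam0)
  · exact Or.inr ((div_eq_one_iff_eq hlam0).mp h)

section FrobTrinomial

variable {F : Type*} [Field F] {m k : ℕ} {τ : F}

def frobTrinomial (m k : ℕ) (τ x : F) : F :=
  x ^ 2 ^ k + τ * x ^ 2 ^ m + (τ + 1) * x

theorem frobTrinomial_zero : frobTrinomial m k τ (0 : F) = 0 := by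
  simp [frobTrinomial]

variable [CharP F 2]

theorem frobTrinomial_add (x y : F) :
    frobTrinomial m k τ (x + y) = frobTrinomial m k τ x + frobTrinomial m k τ y := by
  simp only [frobTrinomial, add_pow_char_pow]
  ring

theorem frobTrinomial_one : frobTrinomial m k τ (1 : F) = 0 := by
  simp only [frobTrinomial, one_pow, mul_one]
  grind

theorem eq_zero_or_one_of_frobTrinomial_eq_zero (hgcd : m.gcd k = 1) {w : F}
    (hw : frobTrinomial m k τ w = 0) (hconj : w ^ 2 ^ m = w) : w = 0 ∨ w = 1 := by
  refine eq_zero_or_one_of_pow_two_pow_eq_self hgcd hconj ?_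
  rw [frobTrinomial, hconj] at hw
  grind

theorem eq_or_eq_add_one_of_frobTrinomial_eq_zero (hgcd : m.gcd k = 1) {x ν : F}
    (hx : frobTrinomial m k τ x = 0) (hν : frobTrinomial m k τ ν = 0)
    (htrace : x + x ^ 2 ^ m = ν + ν ^ 2 ^ m) : x = ν ∨ x = ν + 1 := by
  have hw : frobTrinomial m k τ (x + ν) = 0 := by rw [frobTrinomial_add, hx, hν, add_zero]
  have hconj : (x + ν) ^ 2 ^ m = x + ν := by
    rw [add_pow_char_pow]
    grind
  rcases eq_zero_or_one_of_frobTrinomial_eq_zero hgcd hw hconj with h | h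
  · exact Or.inl (CharTwo.add_eq_zero.mp h)
  · exact Or.inr (by grind)

theorem trace_pow_two_pow_eq_of_frobTrinomial_eq_zero (hbar : ∀ a : F, (a ^ 2 ^ m) ^ 2 ^ m = a)
    {x : F} (hx : frobTrinomial m k τ x = 0) :
    (x + x ^ 2 ^ m) ^ 2 ^ k = (1 + τ + τ ^ 2 ^ m) * (x + x ^ 2 ^ m) := by
  have hxbar : (x ^ 2 ^ m) ^ 2 ^ k + τ ^ 2 ^ m * x + (τ ^ 2 ^ m + 1) * x ^ 2 ^ m = 0 := by
    have h := congrArg (· ^ 2 ^ m) hx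
    simp only [frobTrinomial, add_pow_char_pow, mul_pow, one_pow, hbar, pow_right_comm x (2 ^ k),
      zero_pow (pow_ne_zero m two_ne_zero)] at h
    exact h
  rw [frobTrinomial] at hx
  rw [add_pow_char_pow]
  grind

theorem frobTrinomial_eq_zero_iff (hbar : ∀ a : F, (a ^ 2 ^ m) ^ 2 ^ m = a)
    (hgcd : m.gcd k = 1) {lam μ : F} (hlam0 : lam ≠ 0) (hlam : lam ^ 2 ^ m = lam)
    (hlameq : lam ^ (2 ^ k - 1) = 1 + τ + τ ^ 2 ^ m)
    (hμ : frobTrinomial m k τ μ = 0) (hμtrace : μ + μ ^ 2 ^ m = lam) (x : F) :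
    frobTrinomial m k τ x = 0 ↔ x = 0 ∨ x = 1 ∨ x = μ ∨ x = μ + 1 := by
  constructor
  · intro hx
    have htrace_bar : (x + x ^ 2 ^ m) ^ 2 ^ m = x + x ^ 2 ^ m := by
      rw [add_pow_char_pow, hbar, add_comm]
    have htrace_k := trace_pow_two_pow_eq_of_frobTrinomial_eq_zero hbar hx
    rw [← hlameq] at htrace_k
    rcases eq_zero_or_eq_of_pow_two_pow_eq_pow_mul hgcd hlam0 hlam htrace_bar htrace_k with
      htrace | htrace
    · have htrace0 : x + x ^ 2 ^ m = 0 + 0 ^ 2 ^ m := by simpa using htrace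
      rcases eq_or_eq_add_one_of_frobTrinomial_eq_zero hgcd hx frobTrinomial_zero htrace0 with
        hx0 | hx1
      · exact Or.inl hx0
      · exact Or.inr (Or.inl (by simpa using hx1))
    · have htraceμ := htrace.trans hμtrace.symm
      rcases eq_or_eq_add_one_of_frobTrinomial_eq_zero hgcd hx hμ htraceμ with hxμ | hxμ1
      · exact Or.inr (Or.inr (Or.inl hxμ))
      · exact Or.inr (Or.inr (Or.inr hxμ1))
  · rintro (rfl | rfl | rfl | rfl)
    · exact frobTrinomial_zero
    · exact frobTrinomial_one
    · exact hμ
    · rw [frobTrinomial_add, hμ, frobTrinomial_one, add_zero]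

end FrobTrinomial

theorem stmt_3_general (m k : ℕ) (hk0 : 0 < k)
    (hgcd : Nat.gcd m k = 1) (τ lam μ : GaloisField 2 (2 * m))
    (hlam : lam ^ 2 ^ m = lam)
    (hne : 1 + τ + τ ^ 2 ^ m ≠ 0)
    (hlameq : lam ^ (2 ^ k - 1) = 1 + τ + τ ^ 2 ^ m)
    (hmu : μ ^ 2 ^ k + μ = τ * lam)
    (hmul : μ + μ ^ 2 ^ m = lam) :
    {x : GaloisField 2 (2 * m) | x ^ 2 ^ k + τ * x ^ 2 ^ m + (τ + 1) * x = 0} =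
      {0, 1, μ, μ + 1} := by
  have hbar (a : GaloisField 2 (2 * m)) : (a ^ 2 ^ m) ^ 2 ^ m = a := by
    rw [← pow_mul, ← pow_add, ← two_mul, GaloisField.pow_card_eq_self]
  have hlam0 : lam ≠ 0 := by
    rintro rfl
    rw [zero_pow (Nat.sub_ne_zero_of_lt (Nat.one_lt_two_pow (by omega)))] at hlameq
    exact hne hlameq.symm
  have hμ : frobTrinomial m k τ μ = 0 := by
    rw [frobTrinomial]
    grind
  ext x
  exact frobTrinomial_eq_zero_iff hbar hgcd hlam0 hlam hlameq hμ hmul x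

/-- Lemma 3 (last part): if `λ ∈ F_{2^m}` with `1 + τ + τ̄ ≠ 0`, `λ^{2^k-1} = 1 + τ + τ̄`,
`μ^{2^k} + μ = τλ` and `μ + μ̄ = λ`, then the solution set of `x^{2^k} + τ·x̄ + (τ+1)·x = 0`
in `F_{2^n}` (`n = 2m`) is `{0, 1, μ, μ+1}`. -/
theorem stmt_3 (m k : ℕ) (hm : Odd m) (hk : Odd k) (hm0 : 0 < m) (hk0 : 0 < k)
    (hgcd : Nat.gcd m k = 1) (τ lam μ : GaloisField 2 (2 * m))
    (hlam : lam ^ 2 ^ m = lam)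
    (hne : 1 + τ + τ ^ 2 ^ m ≠ 0)
    (hlameq : lam ^ (2 ^ k - 1) = 1 + τ + τ ^ 2 ^ m)
    (hmu : μ ^ 2 ^ k + μ = τ * lam)
    (hmul : μ + μ ^ 2 ^ m = lam) :
    {x : GaloisField 2 (2 * m) | x ^ 2 ^ k + τ * x ^ 2 ^ m + (τ + 1) * x = 0} =
      {0, 1, μ, μ + 1} :=
  stmt_3_general m k hk0 hgcd τ lam μ hlam hne hlameq hmu hmul
end

section
/- Let m be odd, n = 2m, and ξ ∈ F_{2^n} with ξ + ξ^{2^m} = 1. Then Tr_{F_{2^m}/F_2}(ξ + ξ^2) = 1 and Tr_{F_{2^m}/F_2}(ξ^{2^m} + ξ^2) = 0, where ξ + ξ^2 and ξ^{2^m} + ξ^2 both lie in F_{2^m}. -/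
/-- For `m` odd, `n = 2m` and `ξ ∈ F_{2^n}` with `ξ + ξ̄ = 1` (`x̄ = x^{2^m}`):
`ξ + ξ²` and `ξ̄ + ξ²` lie in `F_{2^m}`, `Tr_{F_{2^m}/F_2}(ξ + ξ²) = 1` and
`Tr_{F_{2^m}/F_2}(ξ̄ + ξ²) = 0`. -/
theorem stmt_5 (m : ℕ) (hm : Odd m) (hm0 : 0 < m) (ξ : GaloisField 2 (2 * m))
    (hxi : ξ + ξ ^ 2 ^ m = 1) :
    (ξ + ξ ^ 2) ^ 2 ^ m = ξ + ξ ^ 2 ∧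
    (ξ ^ 2 ^ m + ξ ^ 2) ^ 2 ^ m = ξ ^ 2 ^ m + ξ ^ 2 ∧
    ∑ i ∈ Finset.range m, (ξ + ξ ^ 2) ^ 2 ^ i = 1 ∧
    ∑ i ∈ Finset.range m, (ξ ^ 2 ^ m + ξ ^ 2) ^ 2 ^ i = 0 := by
  have h2 : (2 : GaloisField 2 (2 * m)) = 0 := CharTwo.two_eq_zero
  have hbar : ξ ^ 2 ^ m = 1 + ξ := by linear_combination hxi - ξ * h2
  have key : ∀ i, (ξ + ξ ^ 2) ^ 2 ^ i = ξ ^ 2 ^ (i + 1) - ξ ^ 2 ^ i := by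
    intro i
    rw [add_pow_char_pow, ← pow_mul]
    have h21 : 2 * 2 ^ i = 2 ^ (i + 1) := by ring
    rw [h21]
    linear_combination ξ ^ 2 ^ i * h2
  have hsq : ξ ^ 2 ^ (m + 1) = (1 + ξ) ^ 2 := by rw [pow_succ, pow_mul, hbar]
  have g1 : (ξ + ξ ^ 2) ^ 2 ^ m = ξ + ξ ^ 2 := by
    rw [key m, hsq]; linear_combination -hbar
  have hb : ξ ^ 2 ^ m + ξ ^ 2 = 1 + (ξ + ξ ^ 2) := by rw [hbar]; ring
  have g2 : (ξ ^ 2 ^ m + ξ ^ 2) ^ 2 ^ m = ξ ^ 2 ^ m + ξ ^ 2 := by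
    rw [hb, add_pow_char_pow, one_pow, g1]
  have g3 : ∑ i ∈ Finset.range m, (ξ + ξ ^ 2) ^ 2 ^ i = 1 := by
    have : ∑ i ∈ Finset.range m, (ξ + ξ ^ 2) ^ 2 ^ i
        = ξ ^ 2 ^ m - ξ ^ 2 ^ 0 := by
      rw [← Finset.sum_range_sub (fun i => ξ ^ 2 ^ i) m]
      exact Finset.sum_congr rfl fun i _ => key i
    rw [this, hbar, pow_zero, pow_one]; ring
  refine ⟨g1, g2, g3, ?_⟩
  have hmcast : (m : GaloisField 2 (2 * m)) = 1 := by
    obtain ⟨k, hk⟩ := hm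
    subst hk
    push_cast
    linear_combination (k : GaloisField 2 (2 * (2 * k + 1))) * h2
  calc ∑ i ∈ Finset.range m, (ξ ^ 2 ^ m + ξ ^ 2) ^ 2 ^ i
      = ∑ i ∈ Finset.range m, (1 + (ξ + ξ ^ 2) ^ 2 ^ i) := by
        refine Finset.sum_congr rfl fun i _ => ?_
        rw [hb, add_pow_char_pow, one_pow]
    _ = (m : GaloisField 2 (2 * m)) + ∑ i ∈ Finset.range m, (ξ + ξ ^ 2) ^ 2 ^ i := by
        rw [Finset.sum_add_distrib, Finset.sum_const, Finset.card_range,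
          nsmul_eq_mul, mul_one]
    _ = 0 := by rw [g3, hmcast]; linear_combination h2
end

section
/- Let m, k be odd with gcd(m,k)=1, n = 2m, x̄ = x^{2^m}. Let θ₁ ∈ F_{2^m} be nonzero, θ₂ ∈ F_{2^n}, θ₄ ∈ F_{2^m}, and suppose t := θ₂θ̄₂/θ₁² ∈ F_{2^m} satisfies t^{2^k} + t = θ₄/θ₁ + (θ₄/θ₁)². If ξ ∈ F_{2^n} satisfies ξ^{2^k} + ξ = θ₄/θ₁ and ξ + ξ̄ = 1, then t = ξ + ξ² or t = ξ̄ + ξ², and t = ξ̄ + ξ² exactly when Tr_{F_{2^m}/F_2}(t) = 0. -/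
open Finset

private lemma tele_sum {F : Type*} [Field F] [CharP F 2] (f : ℕ → F) (N : ℕ) :
    ∑ i ∈ range N, (f i + f (i + 1)) = f 0 + f N := by
  have h2 : (2 : F) = 0 := CharTwo.two_eq_zero
  induction N with
  | zero =>
      simp only [range_zero, sum_empty]
      linear_combination -(f 0) * h2
  | succ N ih =>
      rw [sum_range_succ, ih]
      linear_combination f N * h2

private lemma pow_iter {F : Type*} [Field F] (x : F) (d : ℕ) (h : x ^ 2 ^ d = x) :
    ∀ a : ℕ, x ^ 2 ^ (d * a) = x := by
  intro a
  induction a with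
  | zero => simp
  | succ a ih => rw [Nat.mul_succ, pow_add, pow_mul, ih, h]

/-- Identity (6) of Lemma 4: if `t = θ₂θ̄₂/θ₁² ∈ F_{2^m}` satisfies
`t^{2^k} + t = θ₄/θ₁ + (θ₄/θ₁)²` and `ξ` satisfies `ξ^{2^k} + ξ = θ₄/θ₁`, `ξ + ξ̄ = 1`,
then `t = ξ + ξ²` or `t = ξ̄ + ξ²`, and `t = ξ̄ + ξ²` exactly when `Tr_{F_{2^m}/F_2}(t) = 0`. -/
theorem stmt_10 (m k : ℕ) (hm : Odd m) (hk : Odd k) (hm0 : 0 < m) (hk0 : 0 < k)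
    (hgcd : Nat.gcd m k = 1) (θ₁ θ₂ θ₄ ξ : GaloisField 2 (2 * m))
    (hθ₁m : θ₁ ^ 2 ^ m = θ₁) (hθ₁ : θ₁ ≠ 0) (hθ₄m : θ₄ ^ 2 ^ m = θ₄)
    (t : GaloisField 2 (2 * m))
    (ht : t = θ₂ * θ₂ ^ 2 ^ m / θ₁ ^ 2)
    (htm : t ^ 2 ^ m = t)
    (hteq : t ^ 2 ^ k + t = θ₄ / θ₁ + (θ₄ / θ₁) ^ 2)
    (hxi : ξ ^ 2 ^ k + ξ = θ₄ / θ₁)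
    (hxi1 : ξ + ξ ^ 2 ^ m = 1) :
    (t = ξ + ξ ^ 2 ∨ t = ξ ^ 2 ^ m + ξ ^ 2) ∧
    (t = ξ ^ 2 ^ m + ξ ^ 2 ↔ ∑ i ∈ Finset.range m, t ^ 2 ^ i = 0) := by
  have h2 : (2 : GaloisField 2 (2 * m)) = 0 := CharTwo.two_eq_zero
  have h1ne : (1 : GaloisField 2 (2 * m)) ≠ 0 := one_ne_zero
  haveI : Fintype (GaloisField 2 (2 * m)) := Fintype.ofFinite _
  have hcard : Fintype.card (GaloisField 2 (2 * m)) = 2 ^ (2 * m) := by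
    rw [← Nat.card_eq_fintype_card]; exact GaloisField.card 2 (2 * m) (by omega)
  have hfrob : ∀ x : GaloisField 2 (2 * m), x ^ 2 ^ (2 * m) = x := fun x => by
    rw [← hcard]; exact FiniteField.pow_card x
  set u : GaloisField 2 (2 * m) := θ₄ / θ₁ with hu
  have hxibar : ξ ^ 2 ^ m = 1 + ξ := by linear_combination hxi1 - ξ * h2
  set y : GaloisField 2 (2 * m) := t + (ξ + ξ ^ 2) with hy
  have e1 : t ^ 2 ^ k = t + u + u ^ 2 := by linear_combination hteq - t * h2
  have e2 : ξ ^ 2 ^ k = ξ + u := by linear_combination hxi - ξ * h2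
  have e3 : (ξ ^ 2) ^ 2 ^ k = (ξ + u) ^ 2 := by
    rw [← pow_mul, show 2 * 2 ^ k = 2 ^ k * 2 from Nat.mul_comm _ _, pow_mul, e2]
  have hyk : y ^ 2 ^ k = y := by
    rw [hy, add_pow_char_pow, add_pow_char_pow, e1, e2, e3]
    linear_combination (u + u ^ 2 + ξ * u) * h2
  have hcop : Nat.Coprime (2 * m) k := Nat.Coprime.mul hk.coprime_two_left hgcd
  obtain ⟨a, -, ha⟩ := Nat.exists_mul_mod_eq_one_of_coprime hcop.symm (by omega)
  have hb : k * a = 2 * m * (k * a / (2 * m)) + 1 := by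
    have := Nat.div_add_mod (k * a) (2 * m)
    omega
  have hy2 : y ^ 2 = y := by
    have h1 := pow_iter y k hyk a
    rw [hb, pow_add, pow_one, pow_mul,
      pow_iter y (2 * m) (hfrob y) (k * a / (2 * m))] at h1
    exact h1
  have hy01 : y = 0 ∨ y = 1 := by
    have hz : y * (y - 1) = 0 := by linear_combination hy2
    rcases mul_eq_zero.mp hz with h | h
    · exact Or.inl h
    · exact Or.inr (sub_eq_zero.mp h)
  have htr_a : ∑ i ∈ Finset.range m, (ξ + ξ ^ 2) ^ 2 ^ i = 1 := by
    have hterm : ∀ i, (ξ + ξ ^ 2) ^ 2 ^ i = ξ ^ 2 ^ i + ξ ^ 2 ^ (i + 1) := by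
      intro i
      rw [add_pow_char_pow, ← pow_mul]
      congr 2
      rw [pow_succ, Nat.mul_comm]
    calc ∑ i ∈ Finset.range m, (ξ + ξ ^ 2) ^ 2 ^ i
        = ∑ i ∈ Finset.range m, (ξ ^ 2 ^ i + ξ ^ 2 ^ (i + 1)) :=
          Finset.sum_congr rfl fun i _ => hterm i
      _ = ξ ^ 2 ^ 0 + ξ ^ 2 ^ m := tele_sum (fun i => ξ ^ 2 ^ i) m
      _ = 1 := by rw [pow_zero, pow_one]; exact hxi1
  have htr_one : ∑ i ∈ Finset.range m, (1 : GaloisField 2 (2 * m)) ^ 2 ^ i = 1 := by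
    simp only [one_pow, Finset.sum_const, Finset.card_range, nsmul_eq_mul, mul_one]
    have hm1 : m % 2 = 1 := Nat.odd_iff.mp hm
    have hdvd : (2 : ℕ) ∣ (m - 1) := by omega
    have h0 : (((m - 1 : ℕ)) : GaloisField 2 (2 * m)) = 0 :=
      (CharP.cast_eq_zero_iff (GaloisField 2 (2 * m)) 2 _).mpr hdvd
    rw [Nat.cast_sub (by omega : 1 ≤ m)] at h0
    push_cast at h0 ⊢
    linear_combination h0
  have hbar2 : ξ ^ 2 ^ m + ξ ^ 2 = (ξ + ξ ^ 2) + 1 := by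
    rw [hxibar]; ring
  rcases hy01 with h0 | h1
  · -- t = ξ + ξ²
    have hta : t = ξ + ξ ^ 2 := by
      have hz : t + (ξ + ξ ^ 2) = 0 := h0
      linear_combination hz - (ξ + ξ ^ 2) * h2
    have htrt : ∑ i ∈ Finset.range m, t ^ 2 ^ i = 1 := by rw [hta]; exact htr_a
    refine ⟨Or.inl hta, ?_⟩
    constructor
    · intro hte
      exfalso
      rw [hta, hbar2] at hte
      exact h1ne (by linear_combination -hte)
    · intro h; rw [htrt] at h; exact absurd h h1ne
  · -- t = ξ̄ + ξ²
    have hta : t = ξ ^ 2 ^ m + ξ ^ 2 := by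
      have hz : t + (ξ + ξ ^ 2) = 1 := h1
      rw [hbar2]
      linear_combination hz - (ξ + ξ ^ 2) * h2
    refine ⟨Or.inr hta, ?_⟩
    have htrt : ∑ i ∈ Finset.range m, t ^ 2 ^ i = 0 := by
      calc ∑ i ∈ Finset.range m, t ^ 2 ^ i
          = ∑ i ∈ Finset.range m,
              ((ξ + ξ ^ 2) ^ 2 ^ i + (1 : GaloisField 2 (2 * m)) ^ 2 ^ i) := by
            refine Finset.sum_congr rfl fun i _ => ?_
            rw [hta, hbar2, add_pow_char_pow]
        _ = (∑ i ∈ Finset.range m, (ξ + ξ ^ 2) ^ 2 ^ i)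
            + ∑ i ∈ Finset.range m, (1 : GaloisField 2 (2 * m)) ^ 2 ^ i :=
            Finset.sum_add_distrib
        _ = 0 := by rw [htr_a, htr_one]; linear_combination h2
    exact ⟨fun _ => htrt, fun _ => hta⟩
end

section
/- Let m be odd, n = 2m, x̄ = x^{2^m}. Let θ₁ ∈ F_{2^m} be nonzero, θ₂ ∈ F_{2^n}, and let ξ ∈ F_{2^n} satisfy ξ + ξ̄ = 1 and θ₂θ̄₂/θ₁² = ξ̄ + ξ². Define η(a) = ξ·a + (θ̄₂/θ₁)·ā and M(a) = θ₁·a·ā + θ̄₂·ā² + θ₂·a². Then M(η(a)) = M(a) for all a ∈ F_{2^n}. -/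
/-- Lemma 5 (2): with `η(a) = ξ·a + (θ̄₂/θ₁)·ā` and
`M(a) = θ₁·a·ā + θ̄₂·ā² + θ₂·a²`, where `ξ + ξ̄ = 1` and `θ₂θ̄₂/θ₁² = ξ̄ + ξ²`,
we have `M(η(a)) = M(a)` for all `a`. -/
theorem stmt_12 (m : ℕ) (hm : Odd m) (hm0 : 0 < m) (θ₁ θ₂ ξ : GaloisField 2 (2 * m))
    (hθ₁m : θ₁ ^ 2 ^ m = θ₁) (hθ₁ : θ₁ ≠ 0)
    (hxi1 : ξ + ξ ^ 2 ^ m = 1)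
    (hrel : θ₂ * θ₂ ^ 2 ^ m / θ₁ ^ 2 = ξ ^ 2 ^ m + ξ ^ 2) :
    ∀ a : GaloisField 2 (2 * m),
      (fun z : GaloisField 2 (2 * m) =>
          θ₁ * z * z ^ 2 ^ m + θ₂ ^ 2 ^ m * (z ^ 2 ^ m) ^ 2 + θ₂ * z ^ 2)
        (ξ * a + (θ₂ ^ 2 ^ m / θ₁) * a ^ 2 ^ m) =
      θ₁ * a * a ^ 2 ^ m + θ₂ ^ 2 ^ m * (a ^ 2 ^ m) ^ 2 + θ₂ * a ^ 2 := by
  intro a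
  have h2 : (2 : GaloisField 2 (2 * m)) = 0 := by
    exact_mod_cast CharP.cast_eq_zero (GaloisField 2 (2 * m)) 2
  haveI : Fintype (GaloisField 2 (2 * m)) := Fintype.ofFinite _
  have hcard : ∀ x : GaloisField 2 (2 * m), (x ^ 2 ^ m) ^ 2 ^ m = x := by
    intro x
    rw [← pow_mul, ← pow_add, ← two_mul, ← GaloisField.card 2 (2 * m) (by omega),
      Nat.card_eq_fintype_card, FiniteField.pow_card]
  have hfrob : ∀ x y : GaloisField 2 (2 * m),
      (x + y) ^ 2 ^ m = x ^ 2 ^ m + y ^ 2 ^ m :=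
    fun x y => by rw [add_pow_char_pow]
  have hξq : ξ ^ 2 ^ m = 1 + ξ := by linear_combination hxi1 - ξ * h2
  have hrel' : θ₂ * θ₂ ^ 2 ^ m = θ₁ ^ 2 * (1 + ξ + ξ ^ 2) := by
    rw [div_eq_iff (pow_ne_zero 2 hθ₁)] at hrel
    linear_combination hrel + θ₁ ^ 2 * hξq
  simp only [hfrob, mul_pow, div_pow, hθ₁m, hcard, hξq]
  field_simp
  linear_combination
    (θ₂ ^ 2 ^ m * (a ^ 2 ^ m) ^ 2 + θ₂ * a ^ 2 + θ₁ * a * a ^ 2 ^ m) * hrel' +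
    (θ₂ ^ 2 ^ m * θ₁ ^ 2 * (1 + 2 * ξ + ξ ^ 2) * (a ^ 2 ^ m) ^ 2 +
      θ₂ * θ₁ ^ 2 * (ξ ^ 2 + ξ) * a ^ 2 +
      (θ₁ * θ₂ * θ₂ ^ 2 ^ m * (1 + 2 * ξ) + θ₁ ^ 3 * (ξ + ξ ^ 2)) * a * a ^ 2 ^ m) * h2
end
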